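/- Let G be a finite simple graph, v a vertex of G, and G' = G − v the induced subgraph obtained by deleting v and all edges incident to v. Let σ be a Scarf face of I(G') and let w_1, …, w_t (t ≥ 1) be distinct elements of N_G(v). Suppose dist_G(σ, vw_i) = 0 for some 1 ≤ i ≤ t, and dist_G(e, vw_j) ≠ 1 for every e ∈ σ and every 1 ≤ j ≤ t. Then σ ∪ {vw_1, …, vw_t} is a Scarf face of I(G) if and only if t = 1 and N_σ(w_1) ∩ N_G(v) = ∅. -/

import Mathlib

/-- The monomial (exponent vector) of an edge: `1` on its endpoints, `0` elsewhere. -/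
def edgeMon {V : Type*} [DecidableEq V] (e : Sym2 V) : V → ℕ :=
  fun x => if x ∈ e then 1 else 0

/-- The lcm (componentwise max) of the monomials of a finite set of edges. -/
def eLcm {V : Type*} [DecidableEq V] (σ : Finset (Sym2 V)) : V → ℕ :=
  σ.sup edgeMon

/-- `σ` is a Scarf face of the edge ideal `I(G)`, identified with a set of edges of `G`:
its lcm is distinct from the lcm of any other set of edges of `G`. -/
def IsScarf {V : Type*} [DecidableEq V] (G : SimpleGraph V) (σ : Finset (Sym2 V)) : Prop :=
  (∀ e ∈ σ, e ∈ G.edgeSet) ∧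
    ∀ τ : Finset (Sym2 V), (∀ e ∈ τ, e ∈ G.edgeSet) → eLcm τ = eLcm σ → τ = σ

/-- `dist_G(e, f) = 0`: the two edges share a vertex. -/
def Dist0 {V : Type*} (e f : Sym2 V) : Prop := ∃ x, x ∈ e ∧ x ∈ f

/-- `dist_G(e, f) = 1`: the edges are vertex-disjoint, but some endpoint of `e` is
adjacent in `G` to some endpoint of `f`. -/
def Dist1 {V : Type*} (G : SimpleGraph V) (e f : Sym2 V) : Prop :=
  ¬ Dist0 e f ∧ ∃ x ∈ e, ∃ y ∈ f, G.Adj x y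

/-- The graph `G - v`: delete the vertex `v`, i.e. all edges incident to `v`
(keeping the vertex set). -/
def delVert {V : Type*} (G : SimpleGraph V) (v : V) : SimpleGraph V where
  Adj x y := G.Adj x y ∧ x ≠ v ∧ y ≠ v
  symm := ⟨fun x y h => ⟨h.1.symm, h.2.2, h.2.1⟩⟩
  loopless := ⟨fun x h => G.loopless.irrefl x h.1⟩

/-! Edge monomials are squarefree, so the lcm of a set of edges is the indicator of the set of
vertices it covers, and `σ` is a Scarf face exactly when no other set of edges of the graph
covers the same vertices.

Let `w ∈ W` be a vertex covered by `σ`, and `σ' = σ ∪ {vw' : w' ∈ W}`. If `σ'` is Scarf, every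
edge of `σ'` has a vertex covered by no other edge; for `vw` this can only be `v`, which forces
`W = {w}`. An edge `xw ∈ σ` with `x ∈ N(v)` would then let `σ ∪ {vx}` cover the same vertices as
`σ'`. Conversely, the hypothesis `dist ≠ 1` means that every edge of `σ` meeting `N(v) ∪ N(w)`
contains `w`. If `τ` covers `V(σ) ∪ {v}`, this and `N_σ(w) ∩ N(v) = ∅` make `vw` the only edge
of `τ` through `v`, so the remaining edges of `τ` cover all of `V(σ)` except possibly `w`; they
cover `w` as well (otherwise adding back the edge of `σ` at `w` would give `σ`, whose edge at a
neighbour of `w` must contain `w`), and hence equal `σ` since `σ` is Scarf in `G - v`. -/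

section

variable {V : Type*}

def edgeVerts (σ : Finset (Sym2 V)) : Set V := ⋃ e ∈ σ, (e : Set V)

@[simp]
lemma mem_edgeVerts {σ : Finset (Sym2 V)} {x : V} : x ∈ edgeVerts σ ↔ ∃ e ∈ σ, x ∈ e := by
  simp [edgeVerts]

lemma edgeVerts_insert [DecidableEq V] (e : Sym2 V) (σ : Finset (Sym2 V)) :
    edgeVerts (insert e σ) = (e : Set V) ∪ edgeVerts σ :=
  Finset.set_biUnion_insert _ _ _

lemma edgeVerts_insert_mk_of_mem [DecidableEq V] {σ : Finset (Sym2 V)} {y : V} (x : V)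
    (hy : y ∈ edgeVerts σ) : edgeVerts (insert s(x, y) σ) = insert x (edgeVerts σ) := by
  rw [edgeVerts_insert, Sym2.coe_mk, Set.insert_union, Set.singleton_union,
    Set.insert_eq_of_mem hy]

lemma eLcm_eq_indicator [DecidableEq V] (σ : Finset (Sym2 V)) :
    eLcm σ = (edgeVerts σ).indicator 1 := by
  induction σ using Finset.induction_on with
  | empty => ext; simp [eLcm, edgeVerts]
  | insert e σ _ ih =>
    ext x
    rw [eLcm, Finset.sup_insert, Pi.sup_apply, ← eLcm, ih, edgeVerts_insert]
    by_cases hx : x ∈ e <;> by_cases hσx : x ∈ edgeVerts σ <;> simp [edgeMon, hx, hσx]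

lemma eLcm_eq_eLcm_iff [DecidableEq V] {σ τ : Finset (Sym2 V)} :
    eLcm τ = eLcm σ ↔ edgeVerts τ = edgeVerts σ := by
  rw [eLcm_eq_indicator, eLcm_eq_indicator]
  exact ⟨Set.indicator_one_inj ℕ, fun h => h ▸ rfl⟩

lemma edgeVerts_mono {σ τ : Finset (Sym2 V)} (h : σ ⊆ τ) : edgeVerts σ ⊆ edgeVerts τ :=
  Set.biUnion_subset_biUnion_left (Finset.coe_subset.2 h)

lemma IsScarf.eq_of_edgeVerts_eq [DecidableEq V] {G : SimpleGraph V} {σ τ : Finset (Sym2 V)}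
    (hσ : IsScarf G σ) (hτ : ∀ e ∈ τ, e ∈ G.edgeSet) (h : edgeVerts τ = edgeVerts σ) : τ = σ :=
  hσ.2 τ hτ (eLcm_eq_eLcm_iff.2 h)

lemma IsScarf.exists_mem_forall_eq [DecidableEq V] {G : SimpleGraph V} {σ : Finset (Sym2 V)}
    (hσ : IsScarf G σ) {e : Sym2 V} (he : e ∈ σ) : ∃ x ∈ e, ∀ f ∈ σ, x ∈ f → f = e := by
  by_contra! h
  have hcover : edgeVerts (σ.erase e) = edgeVerts σ := by
    refine (edgeVerts_mono (Finset.erase_subset e σ)).antisymm fun x hx => ?_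
    obtain ⟨f, hf, hxf⟩ := mem_edgeVerts.1 hx
    obtain rfl | hfe := eq_or_ne f e
    · obtain ⟨f', hf', hxf', hf'e⟩ := h x hxf
      exact mem_edgeVerts.2 ⟨f', Finset.mem_erase.2 ⟨hf'e, hf'⟩, hxf'⟩
    · exact mem_edgeVerts.2 ⟨f, Finset.mem_erase.2 ⟨hfe, hf⟩, hxf⟩
  have := hσ.eq_of_edgeVerts_eq (fun f hf => hσ.1 f (Finset.mem_of_mem_erase hf)) hcover
  exact Finset.notMem_erase e σ (this.symm ▸ he)

lemma IsScarf.eq_of_edgeVerts_subset_of_subset_insert [DecidableEq V] {H : SimpleGraph V}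
    {σ τ : Finset (Sym2 V)} {w : V} (hσ : IsScarf H σ) (hτH : ∀ e ∈ τ, e ∈ H.edgeSet)
    (hτσ : edgeVerts τ ⊆ edgeVerts σ) (hστ : edgeVerts σ ⊆ insert w (edgeVerts τ))
    (hw : w ∈ edgeVerts σ) (hclosed : ∀ e ∈ σ, ∀ x ∈ e, s(x, w) ∈ σ → w ∈ e) : τ = σ := by
  have hwτ : w ∈ edgeVerts τ := by
    by_contra hwτ
    obtain ⟨e, he, hwe⟩ := mem_edgeVerts.1 hw
    obtain ⟨x, rfl⟩ : ∃ x, e = s(x, w) := by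
      obtain ⟨x, rfl⟩ := Sym2.mem_iff_exists.1 hwe
      exact ⟨x, Sym2.eq_swap⟩
    have hxσ : x ∈ edgeVerts σ := mem_edgeVerts.2 ⟨_, he, Sym2.mem_mk_left x w⟩
    have hρ : insert s(x, w) τ = σ := by
      refine hσ.eq_of_edgeVerts_eq (fun f hf => ?_) ?_
      · obtain rfl | hf := Finset.mem_insert.1 hf
        exacts [hσ.1 _ he, hτH f hf]
      · rw [edgeVerts_insert, Sym2.coe_mk, Set.insert_union, Set.singleton_union]
        exact (Set.insert_subset hxσ (Set.insert_subset hw hτσ)).antisymm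
          (hστ.trans (Set.subset_insert _ _))
    have hxw : x ≠ w := (hσ.1 _ he : H.Adj x w).ne
    obtain ⟨f, hf, hxf⟩ := mem_edgeVerts.1 ((hστ hxσ).resolve_left hxw)
    exact hwτ (mem_edgeVerts.2 ⟨f, hf, hclosed f (hρ ▸ Finset.mem_insert_of_mem hf) x hxf he⟩)
  exact hσ.eq_of_edgeVerts_eq hτH (hτσ.antisymm (Set.insert_eq_of_mem hwτ ▸ hστ))

lemma mem_edgeSet_delVert {G : SimpleGraph V} {v : V} {e : Sym2 V} :
    e ∈ (delVert G v).edgeSet ↔ e ∈ G.edgeSet ∧ v ∉ e := by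
  induction e using Sym2.ind with
  | _ a b =>
    simp [delVert, ne_comm]

lemma notMem_edgeVerts_of_isScarf_delVert [DecidableEq V] {G : SimpleGraph V} {v : V}
    {σ : Finset (Sym2 V)} (hσ : IsScarf (delVert G v) σ) : v ∉ edgeVerts σ := by
  intro hv
  obtain ⟨e, he, hve⟩ := mem_edgeVerts.1 hv
  exact (mem_edgeSet_delVert.1 (hσ.1 e he)).2 hve

lemma dist0_mk_iff {e : Sym2 V} {a b : V} : Dist0 e s(a, b) ↔ a ∈ e ∨ b ∈ e := by
  simp [Dist0, and_or_left, exists_or]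

lemma dist0_of_not_dist1 {G : SimpleGraph V} {e f : Sym2 V} (h : ¬ Dist1 G e f) {x y : V}
    (hx : x ∈ e) (hy : y ∈ f) (hxy : G.Adj x y) : Dist0 e f :=
  by_contra fun h0 => h ⟨h0, x, hx, y, hy, hxy⟩

lemma mem_of_not_dist1 {G : SimpleGraph V} {e : Sym2 V} {v w x y : V} (hv : v ∉ e)
    (h : ¬ Dist1 G e s(v, w)) (hx : x ∈ e) (hy : y ∈ s(v, w)) (hxy : G.Adj x y) : w ∈ e :=
  (dist0_mk_iff.1 (dist0_of_not_dist1 h hx hy hxy)).resolve_left hv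

lemma eq_singleton_of_isScarf_union_image [DecidableEq V] {G : SimpleGraph V} {v w : V}
    {W : Finset V} {σ : Finset (Sym2 V)} (hS : IsScarf G (σ ∪ W.image (fun w => s(v, w))))
    (hσv : v ∉ edgeVerts σ) (hw : w ∈ W) (hwσ : w ∈ edgeVerts σ) : W = {w} := by
  have hvw : s(v, w) ∈ σ ∪ W.image (fun w => s(v, w)) :=
    Finset.mem_union_right _ (Finset.mem_image_of_mem _ hw)
  obtain ⟨x, hx, hprivate⟩ := hS.exists_mem_forall_eq hvw
  have hxv : x = v := by
    refine (Sym2.mem_iff.1 hx).resolve_right ?_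
    rintro rfl
    obtain ⟨e, he, hxe⟩ := mem_edgeVerts.1 hwσ
    have he_eq : e = s(v, x) := hprivate e (Finset.mem_union_left _ he) hxe
    exact hσv (mem_edgeVerts.2 ⟨e, he, he_eq ▸ Sym2.mem_mk_left v x⟩)
  rw [hxv] at hprivate
  refine Finset.eq_singleton_iff_unique_mem.2 ⟨hw, fun u hu => (Sym2.congr_right (a := v)).1 ?_⟩
  exact hprivate _ (Finset.mem_union_right _ (Finset.mem_image_of_mem _ hu)) (Sym2.mem_mk_left v u)

lemma not_adj_of_isScarf_insert [DecidableEq V] {G : SimpleGraph V} {v w x : V}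
    {σ : Finset (Sym2 V)} (hS : IsScarf G (insert s(v, w) σ)) (hσv : v ∉ edgeVerts σ)
    (hwσ : w ∈ edgeVerts σ) (hxw : s(x, w) ∈ σ) : ¬ G.Adj v x := by
  intro hvx
  have hxσ : x ∈ edgeVerts σ := mem_edgeVerts.2 ⟨_, hxw, Sym2.mem_mk_left x w⟩
  have hτ : insert s(v, x) σ = insert s(v, w) σ := by
    refine hS.eq_of_edgeVerts_eq (fun e he => ?_) ?_
    · obtain rfl | he := Finset.mem_insert.1 he
      exacts [hvx, hS.1 e (Finset.mem_insert_of_mem he)]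
    · rw [edgeVerts_insert_mk_of_mem v hxσ, edgeVerts_insert_mk_of_mem v hwσ]
  have hxw_ne : x ≠ w := (hS.1 _ (Finset.mem_insert_of_mem hxw) : G.Adj x w).ne
  obtain h | h := Finset.mem_insert.1 (hτ ▸ Finset.mem_insert_self s(v, w) σ)
  · exact hxw_ne (Sym2.congr_right.1 h).symm
  · exact hσv (mem_edgeVerts.2 ⟨_, h, Sym2.mem_mk_left v w⟩)

lemma eq_mk_of_mem_of_not_dist1 [DecidableEq V] {G : SimpleGraph V} {v w : V}
    {σ τ : Finset (Sym2 V)} (hτG : ∀ e ∈ τ, e ∈ G.edgeSet)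
    (hτ : edgeVerts τ ⊆ insert v (edgeVerts σ)) (hσv : v ∉ edgeVerts σ)
    (h1 : ∀ e ∈ σ, ¬ Dist1 G e s(v, w)) (hN : ∀ x, s(x, w) ∈ σ → ¬ G.Adj v x)
    {e : Sym2 V} (he : e ∈ τ) (hve : v ∈ e) : e = s(v, w) := by
  obtain ⟨u, rfl⟩ := Sym2.mem_iff_exists.1 hve
  have hvu : G.Adj v u := hτG _ he
  obtain hu | huσ := hτ (mem_edgeVerts.2 ⟨_, he, Sym2.mem_mk_right v u⟩)
  · exact absurd hu hvu.ne'
  obtain ⟨f, hf, huf⟩ := mem_edgeVerts.1 huσ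
  have hwf : w ∈ f := mem_of_not_dist1 (fun hvf => hσv (mem_edgeVerts.2 ⟨f, hf, hvf⟩))
    (h1 f hf) huf (Sym2.mem_mk_left v w) hvu.symm
  obtain rfl | huw := eq_or_ne u w
  · rfl
  · exact absurd hvu (hN u ((Sym2.mem_and_mem_iff huw).1 ⟨huf, hwf⟩ ▸ hf))

theorem isScarf_insert_of_not_dist1 [DecidableEq V] {G : SimpleGraph V} {v w : V}
    {σ : Finset (Sym2 V)} (hσ : IsScarf (delVert G v) σ) (hvw : G.Adj v w)
    (hw : w ∈ edgeVerts σ) (h1 : ∀ e ∈ σ, ¬ Dist1 G e s(v, w))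
    (hN : ∀ x, s(x, w) ∈ σ → ¬ G.Adj v x) : IsScarf G (insert s(v, w) σ) := by
  have hσv := notMem_edgeVerts_of_isScarf_delVert hσ
  have hσG : ∀ e ∈ σ, e ∈ G.edgeSet := fun e he => (mem_edgeSet_delVert.1 (hσ.1 e he)).1
  refine ⟨fun e he => ?_, fun τ hτG hτ => ?_⟩
  · obtain rfl | he := Finset.mem_insert.1 he
    exacts [hvw, hσG e he]
  rw [eLcm_eq_eLcm_iff, edgeVerts_insert_mk_of_mem v hw] at hτ
  have hthrough : ∀ e ∈ τ, v ∈ e → e = s(v, w) :=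
    fun e he hve => eq_mk_of_mem_of_not_dist1 hτG hτ.subset hσv h1 hN he hve
  have hτσ : τ.filter (v ∉ ·) = σ := by
    refine hσ.eq_of_edgeVerts_subset_of_subset_insert (fun e he => ?_) ?_ ?_ hw ?_
    · obtain ⟨he, hve⟩ := Finset.mem_filter.1 he
      exact mem_edgeSet_delVert.2 ⟨hτG e he, hve⟩
    · intro x hx
      obtain ⟨e, he, hxe⟩ := mem_edgeVerts.1 hx
      obtain ⟨he, hve⟩ := Finset.mem_filter.1 he
      refine (hτ.subset (mem_edgeVerts.2 ⟨e, he, hxe⟩)).resolve_left ?_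
      rintro rfl
      exact hve hxe
    · intro x hx
      obtain ⟨e, he, hxe⟩ := mem_edgeVerts.1 (hτ.symm.subset (Set.mem_insert_of_mem v hx))
      by_cases hve : v ∈ e
      · obtain rfl | rfl := Sym2.mem_iff.1 (hthrough e he hve ▸ hxe)
        exacts [absurd hx hσv, Set.mem_insert x _]
      · exact Set.mem_insert_of_mem w (mem_edgeVerts.2 ⟨e, Finset.mem_filter.2 ⟨he, hve⟩, hxe⟩)
    · intro e he x hxe hxw
      exact mem_of_not_dist1 (fun hve => hσv (mem_edgeVerts.2 ⟨e, he, hve⟩)) (h1 e he) hxe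
        (Sym2.mem_mk_right v w) (hσG _ hxw)
  have hvwτ : s(v, w) ∈ τ := by
    obtain ⟨e, he, hve⟩ := mem_edgeVerts.1 (hτ.symm.subset (Set.mem_insert v _))
    exact hthrough e he hve ▸ he
  ext e
  constructor
  · intro he
    by_cases hve : v ∈ e
    · exact hthrough e he hve ▸ Finset.mem_insert_self _ _
    · exact Finset.mem_insert_of_mem (hτσ ▸ Finset.mem_filter.2 ⟨he, hve⟩)
  · intro he
    obtain rfl | he := Finset.mem_insert.1 he
    exacts [hvwτ, (Finset.mem_filter.1 (hτσ.symm ▸ he)).1]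

end

theorem stmt9_general {V : Type*} [DecidableEq V] (G : SimpleGraph V) (v : V)
    (W : Finset V) (hW : ∀ w ∈ W, G.Adj v w)
    (σ : Finset (Sym2 V)) (hσ : IsScarf (delVert G v) σ)
    (h0 : ∃ w ∈ W, ∃ e ∈ σ, Dist0 e s(v, w))
    (h1 : ∀ e ∈ σ, ∀ w ∈ W, ¬ Dist1 G e s(v, w)) :
    IsScarf G (σ ∪ W.image (fun w => s(v, w))) ↔
      ∃ w, W = {w} ∧ {x : V | s(x, w) ∈ σ} ∩ G.neighborSet v = ∅ := by
  have hσv := notMem_edgeVerts_of_isScarf_delVert hσ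
  obtain ⟨w, hwW, hwσ⟩ : ∃ w ∈ W, w ∈ edgeVerts σ := by
    obtain ⟨w, hw, e, he, hd⟩ := h0
    refine ⟨w, hw, mem_edgeVerts.2 ⟨e, he, (dist0_mk_iff.1 hd).resolve_left ?_⟩⟩
    exact fun hve => hσv (mem_edgeVerts.2 ⟨e, he, hve⟩)
  constructor
  · intro hS
    obtain rfl := eq_singleton_of_isScarf_union_image hS hσv hwW hwσ
    rw [Finset.image_singleton, Finset.union_comm, ← Finset.insert_eq] at hS
    exact ⟨w, rfl, Set.eq_empty_of_forall_notMem fun x hx =>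
      not_adj_of_isScarf_insert hS hσv hwσ hx.1 hx.2⟩
  · rintro ⟨u, rfl, hN⟩
    obtain rfl := Finset.mem_singleton.1 hwW
    rw [Finset.image_singleton, Finset.union_comm, ← Finset.insert_eq]
    exact isScarf_insert_of_not_dist1 hσ (hW _ hwW) hwσ (fun e he => h1 e he _ hwW)
      fun x hx hvx => hN.subset ⟨hx, hvx⟩

theorem stmt9 {V : Type*} [Fintype V] [DecidableEq V] (G : SimpleGraph V) (v : V)
    (W : Finset V) (hW : ∀ w ∈ W, G.Adj v w) (hWne : W.Nonempty)
    (σ : Finset (Sym2 V)) (hσ : IsScarf (delVert G v) σ)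
    (h0 : ∃ w ∈ W, ∃ e ∈ σ, Dist0 e s(v, w))
    (h1 : ∀ e ∈ σ, ∀ w ∈ W, ¬ Dist1 G e s(v, w)) :
    IsScarf G (σ ∪ W.image (fun w => s(v, w))) ↔
      ∃ w, W = {w} ∧ {x : V | s(x, w) ∈ σ} ∩ G.neighborSet v = ∅ :=
  stmt9_general G v W hW σ hσ h0 h1
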